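/- Let R₁ = 2x³ − 3xy² and R₂ = 3x²y − 4y³ in the polynomial ring ℚ[x,y]. In the quotient ℚ-algebra B = ℚ[x,y]/(R₁, R₂), the images of the nine monomials 1, x, y, x², xy, y², x³, x²y, x⁴ form a basis of B as a ℚ-vector space; in particular B has dimension 9 over ℚ. -/

import Mathlib

open MvPolynomial

noncomputable section

set_option synthInstance.maxHeartbeats 1000000
set_option maxHeartbeats 2000000

/-- The polynomial ring ℚ[x,y] (x = X 0, y = X 1). -/
abbrev PolyQQ : Type := MvPolynomial (Fin 2) ℚ

/-- The ideal (R₁, R₂) with R₁ = 2x³ − 3xy² and R₂ = 3x²y − 4y³. -/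
def relIdeal : Ideal PolyQQ :=
  Ideal.span {2 * X 0 ^ 3 - 3 * X 0 * X 1 ^ 2, 3 * X 0 ^ 2 * X 1 - 4 * X 1 ^ 3}

/-- B = ℚ[x,y]/(R₁, R₂). -/
abbrev BRing := PolyQQ ⧸ relIdeal

/-- The class of x in B. -/
def xcl : BRing := Ideal.Quotient.mk relIdeal (X 0)

/-- The class of y in B. -/
def ycl : BRing := Ideal.Quotient.mk relIdeal (X 1)

/-- The nine monomials 1, x, y, x², xy, y², x³, x²y, x⁴. -/
def monos : Fin 9 → BRing :=
  ![1, xcl, ycl, xcl ^ 2, xcl * ycl, ycl ^ 2, xcl ^ 3, xcl ^ 2 * ycl, xcl ^ 4]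

/-! ### Auxiliary material: exponent vectors and coefficient functionals -/

/-- The exponent vector (a, b). -/
def e (a b : ℕ) : Fin 2 →₀ ℕ := Finsupp.single 0 a + Finsupp.single 1 b

lemma Xpow_mul (a b : ℕ) : (X 0 ^ a * X 1 ^ b : PolyQQ) = monomial (e a b) 1 := by
  rw [X_pow_eq_monomial, X_pow_eq_monomial, monomial_mul, one_mul]; rfl

lemma R1_eq : (2 * X 0 ^ 3 - 3 * X 0 * X 1 ^ 2 : PolyQQ)
    = monomial (e 3 0) 2 + monomial (e 1 2) (-3) := by
  have h1 : (X 0 ^ 3 : PolyQQ) = monomial (e 3 0) 1 := by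
    rw [show (X 0 ^3 : PolyQQ) = X 0 ^3 * X 1 ^ 0 by ring, Xpow_mul]
  have h2 : (X 0 * X 1 ^ 2 : PolyQQ) = monomial (e 1 2) 1 := by
    rw [show (X 0 * X 1 ^2 : PolyQQ) = X 0 ^1 * X 1 ^ 2 by ring, Xpow_mul]
  rw [mul_assoc, h2, h1, ← map_ofNat (C : ℚ →+* PolyQQ) 2, ← map_ofNat (C : ℚ →+* PolyQQ) 3,
    C_mul_monomial, C_mul_monomial, sub_eq_add_neg, mul_one, mul_one, ← map_neg]

lemma R2_eq : (3 * X 0 ^ 2 * X 1 - 4 * X 1 ^ 3 : PolyQQ)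
    = monomial (e 2 1) 3 + monomial (e 0 3) (-4) := by
  have h1 : (X 0 ^ 2 * X 1 : PolyQQ) = monomial (e 2 1) 1 := by
    rw [show (X 0 ^2 * X 1 : PolyQQ) = X 0 ^2 * X 1 ^ 1 by ring, Xpow_mul]
  have h2 : (X 1 ^ 3 : PolyQQ) = monomial (e 0 3) 1 := by
    rw [show (X 1 ^3 : PolyQQ) = X 0 ^0 * X 1 ^ 3 by ring, Xpow_mul]
  rw [mul_assoc, h1, h2, ← map_ofNat (C : ℚ →+* PolyQQ) 3, ← map_ofNat (C : ℚ →+* PolyQQ) 4,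
    C_mul_monomial, C_mul_monomial, sub_eq_add_neg, mul_one, mul_one, ← map_neg]

@[simp] lemma e_apply0 (a b : ℕ) : e a b 0 = a := by simp [e, Finsupp.single_apply]
@[simp] lemma e_apply1 (a b : ℕ) : e a b 1 = b := by simp [e, Finsupp.single_apply]

lemma e_le {s t a b : ℕ} : e s t ≤ e a b ↔ s ≤ a ∧ t ≤ b := by
  rw [Finsupp.le_def]
  constructor
  · intro h; exact ⟨by simpa using h 0, by simpa using h 1⟩
  · rintro ⟨h1, h2⟩ i
    fin_cases i <;> simpa

lemma e_sub {s t a b : ℕ} : e a b - e s t = e (a - s) (b - t) := by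
  ext i; fin_cases i <;> simp [Finsupp.tsub_apply]

lemma e_eq {s t a b : ℕ} : e s t = e a b ↔ s = a ∧ t = b := by
  constructor
  · intro h; exact ⟨by rw [← e_apply0 s t, h, e_apply0], by rw [← e_apply1 s t, h, e_apply1]⟩
  · rintro ⟨rfl, rfl⟩; rfl

lemma coeff_mul_R1 (a b : ℕ) (p : PolyQQ) :
    coeff (e a b) (p * (2 * X 0 ^ 3 - 3 * X 0 * X 1 ^ 2)) =
      2 * (if 3 ≤ a ∧ 0 ≤ b then coeff (e (a-3) (b-0)) p else 0)
      - 3 * (if 1 ≤ a ∧ 2 ≤ b then coeff (e (a-1) (b-2)) p else 0) := by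
  rw [R1_eq, mul_add, coeff_add, coeff_mul_monomial', coeff_mul_monomial']
  simp only [e_le, e_sub]
  split_ifs <;> ring

lemma coeff_mul_R2 (a b : ℕ) (p : PolyQQ) :
    coeff (e a b) (p * (3 * X 0 ^ 2 * X 1 - 4 * X 1 ^ 3)) =
      3 * (if 2 ≤ a ∧ 1 ≤ b then coeff (e (a-2) (b-1)) p else 0)
      - 4 * (if 0 ≤ a ∧ 3 ≤ b then coeff (e (a-0) (b-3)) p else 0) := by
  rw [R2_eq, mul_add, coeff_add, coeff_mul_monomial', coeff_mul_monomial']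
  simp only [e_le, e_sub]
  split_ifs <;> ring

/-- `coeff` as a linear map. -/
def lc (m : Fin 2 →₀ ℕ) : PolyQQ →ₗ[ℚ] ℚ where
  toFun p := coeff m p
  map_add' p q := coeff_add m p q
  map_smul' c p := coeff_smul m c p

@[simp] lemma lc_apply (m : Fin 2 →₀ ℕ) (p : PolyQQ) : lc m p = coeff m p := rfl

/-- Nine linear functionals computing normal-form coefficients. -/
def Lfun : Fin 9 → (PolyQQ →ₗ[ℚ] ℚ)
  | 0 => lc (e 0 0)
  | 1 => lc (e 1 0)
  | 2 => lc (e 0 1)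
  | 3 => lc (e 2 0)
  | 4 => lc (e 1 1)
  | 5 => lc (e 0 2)
  | 6 => lc (e 1 2) + (3/2 : ℚ) • lc (e 3 0)
  | 7 => lc (e 0 3) + (4/3 : ℚ) • lc (e 2 1)
  | 8 => lc (e 0 4) + (4/3 : ℚ) • lc (e 2 2) + (2 : ℚ) • lc (e 4 0)

lemma L_vanish (i : Fin 9) {q : PolyQQ} (hq : q ∈ relIdeal) : Lfun i q = 0 := by
  rw [relIdeal, Ideal.mem_span_pair] at hq
  obtain ⟨u, v, rfl⟩ := hq
  fin_cases i <;>
    simp [Lfun, coeff_mul_R1, coeff_mul_R2] <;> ring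

lemma coeff_e_pow (a b s t : ℕ) :
    coeff (e a b) (X 0 ^ s * X 1 ^ t : PolyQQ) = if s = a ∧ t = b then 1 else 0 := by
  rw [Xpow_mul, coeff_monomial]; exact if_congr e_eq rfl rfl

lemma ce1 (a b : ℕ) : coeff (e a b) (1:PolyQQ) = if 0=a ∧ 0=b then 1 else 0 := by
  simpa using coeff_e_pow a b 0 0
lemma cex (a b s : ℕ) : coeff (e a b) (X 0^s:PolyQQ) = if s=a ∧ 0=b then 1 else 0 := by
  simpa using coeff_e_pow a b s 0
lemma cey (a b t : ℕ) : coeff (e a b) (X 1^t:PolyQQ) = if 0=a ∧ t=b then 1 else 0 := by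
  simpa using coeff_e_pow a b 0 t
lemma cex1 (a b : ℕ) : coeff (e a b) (X 0:PolyQQ) = if 1=a ∧ 0=b then 1 else 0 := by
  simpa using cex a b 1
lemma cey1 (a b : ℕ) : coeff (e a b) (X 1:PolyQQ) = if 0=a ∧ 1=b then 1 else 0 := by
  simpa using cey a b 1
lemma cexy (a b : ℕ) : coeff (e a b) (X 0 * X 1:PolyQQ) = if 1=a ∧ 1=b then 1 else 0 := by
  simpa using coeff_e_pow a b 1 1
lemma cex2y (a b : ℕ) : coeff (e a b) (X 0^2 * X 1:PolyQQ) = if 2=a ∧ 1=b then 1 else 0 := by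
  simpa using coeff_e_pow a b 2 1

/-- Polynomial representatives of the nine monomials. -/
def Mpoly : Fin 9 → PolyQQ :=
![X 0^0*X 1^0, X 0^1*X 1^0, X 0^0*X 1^1, X 0^2*X 1^0, X 0^1*X 1^1, X 0^0*X 1^2,
  X 0^3*X 1^0, X 0^2*X 1^1, X 0^4*X 1^0]

lemma g_zero (g : Fin 9 → ℚ) (hq : (∑ j, g j • Mpoly j) ∈ relIdeal) : ∀ i, g i = 0 := by
  have h : ∀ k, Lfun k (∑ j, g j • Mpoly j) = 0 := fun k => L_vanish k hq
  have hs : ∀ k : Fin 9, (∑ j, g j * Lfun k (Mpoly j)) = 0 := by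
    intro k; rw [← h k, map_sum]; simp only [map_smul, smul_eq_mul]
  have h0 := hs 0; have h1 := hs 1; have h2 := hs 2; have h3 := hs 3; have h4 := hs 4
  have h5 := hs 5; have h6 := hs 6; have h7 := hs 7; have h8 := hs 8
  clear h hs hq
  simp only [Lfun, Fin.sum_univ_succ, Fin.sum_univ_zero, Mpoly,
    Matrix.cons_val_zero, Matrix.cons_val_one, Matrix.head_cons, Matrix.cons_val_succ,
    LinearMap.add_apply, LinearMap.smul_apply, lc_apply, smul_eq_mul,
    ce1, cex, cey, cex1, cey1, cexy, cex2y, coeff_e_pow]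
    at h0 h1 h2 h3 h4 h5 h6 h7 h8
  norm_num at h0 h1 h2 h3 h4 h5 h6 h7 h8
  intro i; fin_cases i <;> assumption

/-! ### Relations in the quotient ring -/

lemma mk_zero_of (q u v : PolyQQ)
    (h : u * (2 * X 0 ^ 3 - 3 * X 0 * X 1 ^ 2) + v * (3 * X 0 ^ 2 * X 1 - 4 * X 1 ^ 3) = q) :
    Ideal.Quotient.mk relIdeal q = 0 := by
  rw [Ideal.Quotient.eq_zero_iff_mem, relIdeal, Ideal.mem_span_pair]
  exact ⟨u, v, h⟩

lemma natCast_mul_eq_smul (n : ℕ) (z : BRing) : (n : BRing) * z = (n : ℚ) • z := by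
  rw [Nat.cast_smul_eq_nsmul, nsmul_eq_mul]

lemma eq_smul_of_num (m n : ℕ) (hm : (m:ℚ) ≠ 0) {w z : BRing}
    (h : (m : BRing) * w = (n : BRing) * z) : w = ((m:ℚ)⁻¹ * n) • z := by
  rw [natCast_mul_eq_smul, natCast_mul_eq_smul] at h
  calc w = (m:ℚ)⁻¹ • ((m:ℚ) • w) := by rw [smul_smul, inv_mul_cancel₀ hm, one_smul]
  _ = (m:ℚ)⁻¹ • ((n:ℚ) • z) := by rw [h]
  _ = ((m:ℚ)⁻¹ * n) • z := by rw [smul_smul]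

lemma eq_zero_of_num (m : ℕ) (hm : (m:ℚ) ≠ 0) {w : BRing}
    (h : (m : BRing) * w = 0) : w = 0 := by
  have := eq_smul_of_num m 0 hm (z := 0) (by rw [h]; push_cast; ring)
  simpa using this

lemma hA : ((3:ℕ):BRing) * (xcl * ycl^2) = ((2:ℕ):BRing) * xcl^3 := by
  push_cast
  rw [← sub_eq_zero]
  have : (3:BRing) * (xcl * ycl^2) - 2 * xcl^3
      = Ideal.Quotient.mk relIdeal (3 * (X 0 * X 1^2) - 2 * X 0^3) := by
    simp [xcl, ycl, map_ofNat]
  rw [this]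
  exact mk_zero_of _ (-1) 0 (by ring)

lemma hB : xcl^3 * ycl = 0 := by
  have : xcl^3 * ycl = Ideal.Quotient.mk relIdeal (X 0^3 * X 1) := by simp [xcl, ycl]
  rw [this]
  exact mk_zero_of _ (-4 * X 1) (3 * X 0) (by ring)

lemma hC : xcl^5 = 0 := by
  apply eq_zero_of_num 2 (by norm_num)
  push_cast
  have : (2:BRing) * xcl^5 = Ideal.Quotient.mk relIdeal (2 * X 0^5) := by
    simp [xcl, map_ofNat]
  rw [this]
  exact mk_zero_of _ (X 0^2 - 12 * X 1^2) (9 * X 0 * X 1) (by ring)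

lemma hD : ((4:ℕ):BRing) * ycl^3 = ((3:ℕ):BRing) * (xcl^2 * ycl) := by
  push_cast
  rw [← sub_eq_zero]
  have : (4:BRing) * ycl^3 - 3 * (xcl^2 * ycl)
      = Ideal.Quotient.mk relIdeal (4 * X 1^3 - 3 * (X 0^2 * X 1)) := by
    simp [xcl, ycl, map_ofNat]
  rw [this]
  exact mk_zero_of _ 0 (-1) (by ring)

lemma hE : ((3:ℕ):BRing) * (xcl^2 * ycl^2) = ((2:ℕ):BRing) * xcl^4 := by
  push_cast
  rw [← sub_eq_zero]
  have : (3:BRing) * (xcl^2 * ycl^2) - 2 * xcl^4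
      = Ideal.Quotient.mk relIdeal (3 * (X 0^2 * X 1^2) - 2 * X 0^4) := by
    simp [xcl, ycl, map_ofNat]
  rw [this]
  exact mk_zero_of _ (-X 0) 0 (by ring)

lemma hF : xcl^4 * ycl = 0 := by
  have : xcl^4 * ycl = Ideal.Quotient.mk relIdeal (X 0^4 * X 1) := by simp [xcl, ycl]
  rw [this]
  exact mk_zero_of _ (-4 * X 0 * X 1) (3 * X 0^2) (by ring)

lemma span_top : Submodule.span ℚ (Set.range monos) = ⊤ := by
  set T := Submodule.span ℚ (Set.range monos) with hT
  have hmem : ∀ i, monos i ∈ T := fun i => Submodule.subset_span ⟨i, rfl⟩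
  have hA' : xcl * ycl^2 = ((3:ℚ)⁻¹ * 2) • xcl^3 := eq_smul_of_num 3 2 (by norm_num) hA
  have hD' : ycl^3 = ((4:ℚ)⁻¹ * 3) • (xcl^2 * ycl) := eq_smul_of_num 4 3 (by norm_num) hD
  have hE' : xcl^2*ycl^2 = ((3:ℚ)⁻¹ * 2) • xcl^4 := eq_smul_of_num 3 2 (by norm_num) hE
  have hxT : ∀ i, xcl * monos i ∈ T := by
    intro i
    fin_cases i
    · show xcl * 1 ∈ T
      rw [mul_one]; exact hmem 1
    · show xcl * xcl ∈ T
      rw [show xcl * xcl = monos 3 from by show _ = xcl^2; ring]; exact hmem 3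
    · show xcl * ycl ∈ T
      exact hmem 4
    · show xcl * xcl^2 ∈ T
      rw [show xcl * xcl^2 = monos 6 from by show _ = xcl^3; ring]; exact hmem 6
    · show xcl * (xcl * ycl) ∈ T
      rw [show xcl * (xcl * ycl) = monos 7 from by show _ = xcl^2 * ycl; ring]; exact hmem 7
    · show xcl * ycl^2 ∈ T
      rw [hA']; exact T.smul_mem _ (hmem 6)
    · show xcl * xcl^3 ∈ T
      rw [show xcl * xcl^3 = monos 8 from by show _ = xcl^4; ring]; exact hmem 8
    · show xcl * (xcl^2 * ycl) ∈ T
      rw [show xcl * (xcl^2 * ycl) = xcl^3 * ycl from by ring, hB]; exact T.zero_mem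
    · show xcl * xcl^4 ∈ T
      rw [show xcl * xcl^4 = xcl^5 from by ring, hC]; exact T.zero_mem
  have hyT : ∀ i, ycl * monos i ∈ T := by
    intro i
    fin_cases i
    · show ycl * 1 ∈ T
      rw [mul_one]; exact hmem 2
    · show ycl * xcl ∈ T
      rw [show ycl * xcl = monos 4 from by show _ = xcl * ycl; ring]; exact hmem 4
    · show ycl * ycl ∈ T
      rw [show ycl * ycl = monos 5 from by show _ = ycl^2; ring]; exact hmem 5
    · show ycl * xcl^2 ∈ T
      rw [show ycl * xcl^2 = monos 7 from by show _ = xcl^2 * ycl; ring]; exact hmem 7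
    · show ycl * (xcl * ycl) ∈ T
      rw [show ycl * (xcl * ycl) = xcl * ycl^2 from by ring, hA']; exact T.smul_mem _ (hmem 6)
    · show ycl * ycl^2 ∈ T
      rw [show ycl * ycl^2 = ycl^3 from by ring, hD']; exact T.smul_mem _ (hmem 7)
    · show ycl * xcl^3 ∈ T
      rw [show ycl * xcl^3 = xcl^3 * ycl from by ring, hB]; exact T.zero_mem
    · show ycl * (xcl^2 * ycl) ∈ T
      rw [show ycl * (xcl^2 * ycl) = xcl^2 * ycl^2 from by ring, hE']; exact T.smul_mem _ (hmem 8)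
    · show ycl * xcl^4 ∈ T
      rw [show ycl * xcl^4 = xcl^4 * ycl from by ring, hF]; exact T.zero_mem
  have hxmul : ∀ z ∈ T, xcl * z ∈ T := by
    intro z hz
    induction hz using Submodule.span_induction with
    | mem w hw => obtain ⟨i, rfl⟩ := hw; exact hxT i
    | zero => rw [mul_zero]; exact T.zero_mem
    | add a b _ _ ha hb => rw [mul_add]; exact T.add_mem ha hb
    | smul c a _ ha =>
        have h2 : xcl * (c • a) = c • (xcl * a) := mul_smul_comm c xcl a
        rw [h2]; exact T.smul_mem c ha
  have hymul : ∀ z ∈ T, ycl * z ∈ T := by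
    intro z hz
    induction hz using Submodule.span_induction with
    | mem w hw => obtain ⟨i, rfl⟩ := hw; exact hyT i
    | zero => rw [mul_zero]; exact T.zero_mem
    | add a b _ _ ha hb => rw [mul_add]; exact T.add_mem ha hb
    | smul c a _ ha =>
        have h2 : ycl * (c • a) = c • (ycl * a) := mul_smul_comm c ycl a
        rw [h2]; exact T.smul_mem c ha
  have hall : ∀ p : PolyQQ, Ideal.Quotient.mk relIdeal p ∈ T := by
    intro p
    induction p using MvPolynomial.induction_on with
    | C a =>
        have h1 : Ideal.Quotient.mk relIdeal (C a) = a • (1:BRing) := by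
          rw [← Algebra.algebraMap_eq_smul_one]; rfl
        rw [h1]; exact T.smul_mem a (hmem 0)
    | add p q hp hq => rw [map_add]; exact T.add_mem hp hq
    | mul_X p n hp =>
        rw [map_mul, mul_comm]
        fin_cases n
        · exact hxmul _ hp
        · exact hymul _ hp
  rw [eq_top_iff]
  rintro z -
  obtain ⟨p, rfl⟩ := Ideal.Quotient.mk_surjective z
  exact hall p

lemma mk_Mpoly (j : Fin 9) : Ideal.Quotient.mk relIdeal (Mpoly j) = monos j := by
  fin_cases j
  · show Ideal.Quotient.mk relIdeal (X 0^0 * X 1^0) = 1; simp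
  · show Ideal.Quotient.mk relIdeal (X 0^1 * X 1^0) = xcl; simp [xcl]
  · show Ideal.Quotient.mk relIdeal (X 0^0 * X 1^1) = ycl; simp [ycl]
  · show Ideal.Quotient.mk relIdeal (X 0^2 * X 1^0) = xcl^2; simp [xcl]
  · show Ideal.Quotient.mk relIdeal (X 0^1 * X 1^1) = xcl * ycl; simp [xcl, ycl]
  · show Ideal.Quotient.mk relIdeal (X 0^0 * X 1^2) = ycl^2; simp [ycl]
  · show Ideal.Quotient.mk relIdeal (X 0^3 * X 1^0) = xcl^3; simp [xcl]
  · show Ideal.Quotient.mk relIdeal (X 0^2 * X 1^1) = xcl^2 * ycl; simp [xcl, ycl]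
  · show Ideal.Quotient.mk relIdeal (X 0^4 * X 1^0) = xcl^4; simp [xcl]

lemma monos_indep : LinearIndependent ℚ monos := by
  rw [Fintype.linearIndependent_iff]
  intro g hg
  apply g_zero g
  rw [← Ideal.Quotient.eq_zero_iff_mem]
  have hcalc : Ideal.Quotient.mk relIdeal (∑ j, g j • Mpoly j) = ∑ j, g j • monos j := by
    calc Ideal.Quotient.mk relIdeal (∑ j, g j • Mpoly j)
        = (Ideal.Quotient.mkₐ ℚ relIdeal) (∑ j, g j • Mpoly j) := by
          rw [Ideal.Quotient.mkₐ_eq_mk]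
    _ = ∑ j, g j • (Ideal.Quotient.mkₐ ℚ relIdeal) (Mpoly j) := by
          rw [map_sum]; simp only [map_smul]
    _ = ∑ j, g j • monos j := by
          simp only [Ideal.Quotient.mkₐ_eq_mk, mk_Mpoly]
  rw [hcalc, hg]

/-- The images of 1, x, y, x², xy, y², x³, x²y, x⁴ form a ℚ-basis of
B = ℚ[x,y]/(2x³ − 3xy², 3x²y − 4y³); in particular B is 9-dimensional over ℚ. -/
theorem orbifold_chow_ring_basis :
    LinearIndependent ℚ monos ∧
    Submodule.span ℚ (Set.range monos) = (⊤ : Submodule ℚ BRing) ∧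
    Module.finrank ℚ BRing = 9 := by
  refine ⟨monos_indep, span_top, ?_⟩
  have b : Module.Basis (Fin 9) ℚ BRing := Module.Basis.mk monos_indep (by rw [span_top])
  rw [Module.finrank_eq_card_basis b, Fintype.card_fin]
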